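/- arXiv:1402.2807 — 5 statements merged into one kernel-verified Lean document; each statement's English description precedes it below -/
import Mathlib

section
/- Let G be a finite simple graph and e an edge of G. For every edge e' of G with e' ≠ e, deleting e decreases the truss number of e' by at most 1: φ_{G−e}(e') ≥ φ_G(e') − 1. -/
/-!
Let `H` be a `φ_G(e')`-truss containing `e'`. If `φ_G(e') ≤ 2` there is nothing to prove, since
`e'` is still an edge of `G - e`. Otherwise every edge of `H` lies in a triangle of `H`, and we
delete `e` from `H`: an edge `ab ≠ e` loses at most one triangle (its apex is the endpoint of `e`
outside `{a, b}`), and `H` stays connected because the endpoints of `e` remain joined through the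
apex of a triangle on `e`. So `H - e` is a `(φ_G(e') - 1)`-truss of `G - e` containing `e'`.
-/

open SimpleGraph

variable {V : Type*}

/-- `H` is a `k`-truss of `G`: a connected subgraph with at least one edge in which
every edge lies in at least `k - 2` triangles of `H` (i.e. the endpoints of every edge
have at least `k - 2` common neighbors in `H`). -/
def IsTruss (G : SimpleGraph V) (k : ℕ) (H : G.Subgraph) : Prop :=
  H.Connected ∧ H.edgeSet.Nonempty ∧
    ∀ a b : V, H.Adj a b → k - 2 ≤ {c : V | H.Adj a c ∧ H.Adj b c}.ncard

/-- The truss number `φ_G(e)` of an edge `e`: the largest `k` such that `e` lies in some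
`k`-truss of `G`. -/
noncomputable def trussNumber (G : SimpleGraph V) (e : Sym2 V) : ℕ :=
  sSup {k : ℕ | ∃ H : G.Subgraph, IsTruss G k H ∧ e ∈ H.edgeSet}

/-- The support of the edge `(a, b)` in a subgraph `H`: the number of triangles of `H`
containing it, i.e. the number of common neighbors of `a` and `b` in `H`. -/
noncomputable def suppIn {G : SimpleGraph V} (H : G.Subgraph) (a b : V) : ℕ :=
  {c : V | H.Adj a c ∧ H.Adj b c}.ncard

/-- The support of the edge `(a, b)` in `G`. -/
noncomputable def suppG (G : SimpleGraph V) (a b : V) : ℕ :=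
  {c : V | G.Adj a c ∧ G.Adj b c}.ncard

/-- `S_{a,b}`: the common neighbors of `a` and `b` in `G`. -/
def commonNbrs (G : SimpleGraph V) (a b : V) : Set V :=
  {c : V | G.Adj a c ∧ G.Adj b c}

/-- `E_{S_{a,b} ↔ {a,b}}`: the edges of `G` joining a common neighbor of `a` and `b`
to `a` or to `b`. -/
def sideEdges (G : SimpleGraph V) (a b : V) : Set (Sym2 V) :=
  {e | ∃ c, G.Adj a c ∧ G.Adj b c ∧ (e = s(a, c) ∨ e = s(b, c))}

/-- `k_min((a,b))`: minimum truss number among the edges of `E_{S_{a,b} ↔ {a,b}}`. -/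
noncomputable def kmin (G : SimpleGraph V) (a b : V) : ℕ :=
  sInf (trussNumber G '' sideEdges G a b)

/-- `k_max((a,b))`: maximum truss number among the edges of `E_{S_{a,b} ↔ {a,b}}`. -/
noncomputable def kmax (G : SimpleGraph V) (a b : V) : ℕ :=
  sSup (trussNumber G '' sideEdges G a b)

/-- `G + (a,b)`: the graph obtained from `G` by inserting the edge `(a, b)`. -/
def insertEdge (G : SimpleGraph V) (a b : V) : SimpleGraph V :=
  G ⊔ fromEdgeSet {s(a, b)}

lemma Sym2.eq_of_side_eq_of_side_eq {u v c₁ c₂ : V} {e : Sym2 V} (huv : s(u, v) ≠ e)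
    (h₁ : s(u, c₁) = e ∨ s(v, c₁) = e) (h₂ : s(u, c₂) = e ∨ s(v, c₂) = e) : c₁ = c₂ := by
  rcases h₁ with rfl | rfl <;> grind [Sym2.eq_iff]

namespace SimpleGraph

variable {G : SimpleGraph V}

namespace Subgraph

lemma ncard_commonNbrs_le_deleteEdges_singleton_add_one [Finite V] (H : G.Subgraph)
    {a b : V} {e : Sym2 V} (hab : s(a, b) ≠ e) :
    {c | H.Adj a c ∧ H.Adj b c}.ncard ≤
      {c | (H.deleteEdges {e}).Adj a c ∧ (H.deleteEdges {e}).Adj b c}.ncard + 1 := by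
  set A := {c | H.Adj a c ∧ H.Adj b c}
  set B := {c | (H.deleteEdges {e}).Adj a c ∧ (H.deleteEdges {e}).Adj b c}
  have hlost : (A \ B).ncard ≤ 1 := by
    rw [Set.ncard_le_one_iff]
    rintro c₁ c₂ ⟨hc₁, hc₁B⟩ ⟨hc₂, hc₂B⟩
    simp only [B, A, deleteEdges_adj, Set.mem_singleton_iff, Set.mem_ofPred_eq] at *
    exact Sym2.eq_of_side_eq_of_side_eq hab (by tauto) (by tauto)
  calc A.ncard ≤ (A \ B).ncard + B.ncard := Set.ncard_le_ncard_sdiff_add_ncard A B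
    _ ≤ B.ncard + 1 := by omega

lemma mem_edgeSet_deleteEdges_iff {H : G.Subgraph} {s : Set (Sym2 V)} {e : Sym2 V} :
    e ∈ (H.deleteEdges s).edgeSet ↔ e ∈ H.edgeSet ∧ e ∉ s := by
  induction e using Sym2.ind with
  | _ a b => exact Iff.rfl

lemma Connected.deleteEdges_singleton {H : G.Subgraph} (hH : H.Connected)
    (htri : ∀ a b, H.Adj a b → ∃ c, H.Adj a c ∧ H.Adj b c) (e : Sym2 V) :
    (H.deleteEdges {e}).Connected := by
  have hstep : ∀ x y : H.verts, H.coe.Adj x y → (H.deleteEdges {e}).coe.Reachable x y := by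
    rintro ⟨x, hx⟩ ⟨y, hy⟩ (hxy : H.Adj x y)
    by_cases hxye : s(x, y) = e
    · subst hxye
      obtain ⟨c, hxc, hyc⟩ := htri x y hxy
      have hc : c ∈ H.verts := H.edge_vert hxc.symm
      have hxc' : (H.deleteEdges {s(x, y)}).coe.Adj ⟨x, hx⟩ ⟨c, hc⟩ :=
        ⟨hxc, by simp [Sym2.toRel_prop, (H.adj_sub hyc).ne', (H.adj_sub hxy).ne]⟩
      have hcy : (H.deleteEdges {s(x, y)}).coe.Adj ⟨c, hc⟩ ⟨y, hy⟩ :=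
        ⟨hyc.symm, by simp [Sym2.toRel_prop, (H.adj_sub hxc).ne', (H.adj_sub hxy).ne']⟩
      exact hxc'.reachable.trans hcy.reachable
    · exact Adj.reachable (⟨hxy, hxye⟩ : (H.deleteEdges {e}).coe.Adj ⟨x, hx⟩ ⟨y, hy⟩)
  refine Subgraph.connected_iff.mpr ⟨Subgraph.preconnected_iff.mpr fun u v => ?_, hH.nonempty⟩
  rw [reachable_iff_reflTransGen]
  exact Relation.reflTransGen_closed (fun x y h => (reachable_iff_reflTransGen x y).mp
    (hstep x y h)) _ _ ((reachable_iff_reflTransGen u v).mp (hH u v))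

/-- `H.comap (Hom.ofLE hle)` is `H` regarded as a subgraph of the smaller graph `G'`. -/
lemma comap_ofLE_adj_iff {G' : SimpleGraph V} (hle : G' ≤ G) {H : G.Subgraph}
    (hH : ∀ a b, H.Adj a b → G'.Adj a b) {a b : V} :
    (H.comap (Hom.ofLE hle)).Adj a b ↔ H.Adj a b :=
  ⟨And.right, fun h => ⟨hH a b h, h⟩⟩

lemma mem_edgeSet_comap_ofLE_iff {G' : SimpleGraph V} (hle : G' ≤ G) {H : G.Subgraph}
    (hH : ∀ a b, H.Adj a b → G'.Adj a b) {e : Sym2 V} :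
    e ∈ (H.comap (Hom.ofLE hle)).edgeSet ↔ e ∈ H.edgeSet := by
  induction e using Sym2.ind with
  | _ a b => exact comap_ofLE_adj_iff hle hH

end Subgraph

end SimpleGraph

open SimpleGraph

section IsTruss

variable {G : SimpleGraph V} {k : ℕ} {H : G.Subgraph}

lemma exists_isTruss_two_of_mem_edgeSet {e : Sym2 V} (he : e ∈ G.edgeSet) :
    ∃ H : G.Subgraph, IsTruss G 2 H ∧ e ∈ H.edgeSet := by
  induction e using Sym2.ind with
  | _ a b =>
    rw [mem_edgeSet] at he
    exact ⟨G.subgraphOfAdj he, ⟨Subgraph.subgraphOfAdj_connected he, ⟨s(a, b), by simp⟩,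
      fun _ _ _ => by simp⟩, by simp⟩

lemma IsTruss.comap_ofLE {G' : SimpleGraph V} (hH : IsTruss G k H) (hle : G' ≤ G)
    (hsub : ∀ a b, H.Adj a b → G'.Adj a b) : IsTruss G' k (H.comap (Hom.ofLE hle)) := by
  obtain ⟨hconn, ⟨e, he⟩, htri⟩ := hH
  have hadj := fun {a b} => Subgraph.comap_ofLE_adj_iff hle hsub (a := a) (b := b)
  have hcoe : (H.comap (Hom.ofLE hle)).coe = H.coe := by
    ext a b
    exact hadj
  refine ⟨⟨hcoe ▸ hconn.coe⟩, ⟨e, (Subgraph.mem_edgeSet_comap_ofLE_iff hle hsub).mpr he⟩,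
    fun a b hab => ?_⟩
  simpa only [hadj] using htri a b (hadj.mp hab)

lemma IsTruss.deleteEdges_singleton [Finite V] (hH : IsTruss G k H) (hk : 3 ≤ k)
    {e e' : Sym2 V} (he' : e' ∈ H.edgeSet) (hne : e' ≠ e) :
    IsTruss G (k - 1) (H.deleteEdges {e}) := by
  obtain ⟨hconn, -, htri⟩ := hH
  have htriangle : ∀ a b, H.Adj a b → ∃ c, H.Adj a c ∧ H.Adj b c := fun a b hab =>
    have := htri a b hab
    Set.nonempty_of_ncard_ne_zero (s := {c | H.Adj a c ∧ H.Adj b c}) (by omega)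
  refine ⟨hconn.deleteEdges_singleton htriangle e,
    ⟨e', Subgraph.mem_edgeSet_deleteEdges_iff.mpr ⟨he', hne⟩⟩, fun a b hab => ?_⟩
  have hab' : s(a, b) ≠ e := by simpa using hab.2
  have := H.ncard_commonNbrs_le_deleteEdges_singleton_add_one hab'
  have := htri a b hab.1
  omega

end IsTruss

section trussNumber

variable [Finite V] (G : SimpleGraph V) (e : Sym2 V)

lemma bddAbove_setOf_isTruss :
    BddAbove {k : ℕ | ∃ H : G.Subgraph, IsTruss G k H ∧ e ∈ H.edgeSet} := by
  refine ⟨Nat.card V + 2, ?_⟩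
  rintro k ⟨H, ⟨-, -, htri⟩, he⟩
  induction e using Sym2.ind with
  | _ a b =>
    have := htri a b he
    have := Set.ncard_le_card {c | H.Adj a c ∧ H.Adj b c}
    omega

variable {G e}

lemma IsTruss.le_trussNumber {k : ℕ} {H : G.Subgraph} (hH : IsTruss G k H)
    (he : e ∈ H.edgeSet) : k ≤ trussNumber G e :=
  le_csSup (bddAbove_setOf_isTruss G e) ⟨H, hH, he⟩

lemma two_le_trussNumber (he : e ∈ G.edgeSet) : 2 ≤ trussNumber G e :=
  have ⟨_, hH, heH⟩ := exists_isTruss_two_of_mem_edgeSet he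
  hH.le_trussNumber heH

lemma exists_isTruss_trussNumber (he : e ∈ G.edgeSet) :
    ∃ H : G.Subgraph, IsTruss G (trussNumber G e) H ∧ e ∈ H.edgeSet :=
  Nat.sSup_mem ⟨2, exists_isTruss_two_of_mem_edgeSet he⟩ (bddAbove_setOf_isTruss G e)

end trussNumber

theorem stmt3_general [Fintype V] (G : SimpleGraph V) (e e' : Sym2 V)
    (he' : e' ∈ G.edgeSet) (hne : e' ≠ e) :
    trussNumber G e' - 1 ≤ trussNumber (G.deleteEdges {e}) e' := by
  have he'G : e' ∈ (G.deleteEdges {e}).edgeSet := by simp [edgeSet_deleteEdges, he', hne]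
  obtain hk | hk := le_or_gt (trussNumber G e') 2
  · have := two_le_trussNumber he'G
    omega
  obtain ⟨H, hH, he'H⟩ := exists_isTruss_trussNumber he'
  have hH' := hH.deleteEdges_singleton hk he'H hne
  have hsub : ∀ a b, (H.deleteEdges {e}).Adj a b → (G.deleteEdges {e}).Adj a b :=
    fun _ _ hab => by simpa [Sym2.toRel_prop] using And.intro (H.adj_sub hab.1) hab.2
  exact (hH'.comap_ofLE (G.deleteEdges_le {e}) hsub).le_trussNumber
    ((Subgraph.mem_edgeSet_comap_ofLE_iff _ hsub).mpr
      (Subgraph.mem_edgeSet_deleteEdges_iff.mpr ⟨he'H, hne⟩))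

theorem stmt3 [Fintype V] (G : SimpleGraph V) (e e' : Sym2 V)
    (he : e ∈ G.edgeSet) (he' : e' ∈ G.edgeSet) (hne : e' ≠ e) :
    trussNumber G e' - 1 ≤ trussNumber (G.deleteEdges {e}) e' :=
  stmt3_general G e e' he' hne
end

section
/- Let G be a finite simple graph and e an edge of G. Every edge e' of G with φ_G(e') > φ_G(e) is unaffected by deleting e: φ_{G−e}(e') = φ_G(e'). -/
open SimpleGraph

variable {V : Type*}

lemma trussSet_bdd [Fintype V] (G : SimpleGraph V) (e : Sym2 V) :
    BddAbove {k : ℕ | ∃ H : G.Subgraph, IsTruss G k H ∧ e ∈ H.edgeSet} := by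
  refine ⟨Fintype.card V + 2, ?_⟩
  rintro k ⟨H, ⟨-, hne, hdeg⟩, -⟩
  obtain ⟨f, hf⟩ := hne
  induction f using Sym2.ind with
  | _ a b =>
    have h1 := hdeg a b (SimpleGraph.Subgraph.mem_edgeSet.mp hf)
    have h2 : {c : V | H.Adj a c ∧ H.Adj b c}.ncard ≤ Fintype.card V := by
      have := Set.ncard_le_ncard (Set.subset_univ {c : V | H.Adj a c ∧ H.Adj b c})
        Set.finite_univ
      rwa [Set.ncard_univ, Nat.card_eq_fintype_card] at this
    omega

lemma two_mem_trussSet (G : SimpleGraph V) (e : Sym2 V) (he : e ∈ G.edgeSet) :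
    2 ∈ {k : ℕ | ∃ H : G.Subgraph, IsTruss G k H ∧ e ∈ H.edgeSet} := by
  induction e using Sym2.ind with
  | _ a b =>
    have hab : G.Adj a b := he
    refine ⟨G.subgraphOfAdj hab, ⟨Subgraph.subgraphOfAdj_connected hab, ?_, ?_⟩, ?_⟩
    · exact ⟨s(a, b), by simp [edgeSet_subgraphOfAdj]⟩
    · intro x y _; simp
    · simp [edgeSet_subgraphOfAdj]

/-- Transfer a truss of `G` avoiding `e` to a truss of `G.deleteEdges {e}`. -/
lemma truss_transfer (G : SimpleGraph V) (e : Sym2 V) (k : ℕ) (H : G.Subgraph)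
    (hT : IsTruss G k H) (heH : e ∉ H.edgeSet) :
    ∃ H' : (G.deleteEdges {e}).Subgraph, IsTruss (G.deleteEdges {e}) k H' ∧
      H'.edgeSet = H.edgeSet := by
  refine ⟨⟨H.verts, H.Adj, ?_, H.edge_vert, H.symm⟩, ?_, rfl⟩
  · intro a b hab
    rw [SimpleGraph.deleteEdges_adj]
    refine ⟨H.adj_sub hab, ?_⟩
    simp only [Set.mem_singleton_iff]
    rintro rfl
    exact heH hab
  · obtain ⟨⟨hc⟩, hne, hdeg⟩ := hT
    exact ⟨⟨hc⟩, hne, hdeg⟩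

/-- Transfer a truss of `G.deleteEdges {e}` to a truss of `G`. -/
lemma truss_transfer' (G : SimpleGraph V) (e : Sym2 V) (k : ℕ)
    (H : (G.deleteEdges {e}).Subgraph) (hT : IsTruss (G.deleteEdges {e}) k H) :
    ∃ H' : G.Subgraph, IsTruss G k H' ∧ H'.edgeSet = H.edgeSet := by
  refine ⟨⟨H.verts, H.Adj, fun hab => (SimpleGraph.deleteEdges_adj.mp
    (H.adj_sub hab)).1, H.edge_vert, H.symm⟩, ?_, rfl⟩
  obtain ⟨⟨hc⟩, hne, hdeg⟩ := hT
  exact ⟨⟨hc⟩, hne, hdeg⟩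

theorem stmt5 [Fintype V] (G : SimpleGraph V) (e e' : Sym2 V)
    (he : e ∈ G.edgeSet) (he' : e' ∈ G.edgeSet)
    (h : trussNumber G e < trussNumber G e') :
    trussNumber (G.deleteEdges {e}) e' = trussNumber G e' := by
  have hne : e' ≠ e := fun hh => by rw [hh] at h; exact lt_irrefl _ h
  have he'd : e' ∈ (G.deleteEdges {e}).edgeSet := by
    rw [SimpleGraph.edgeSet_deleteEdges]
    exact ⟨he', by simpa using hne⟩
  apply le_antisymm
  · -- every truss of G - e is a truss of G
    apply csSup_le_csSup (trussSet_bdd G e')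
    · exact ⟨2, two_mem_trussSet _ _ he'd⟩
    · rintro k ⟨H, hT, hmem⟩
      obtain ⟨H', hT', hE⟩ := truss_transfer' G e k H hT
      exact ⟨H', hT', hE ▸ hmem⟩
  · -- the maximal truss of G containing e' avoids e
    have hmem : trussNumber G e' ∈
        {k : ℕ | ∃ H : G.Subgraph, IsTruss G k H ∧ e' ∈ H.edgeSet} :=
      Nat.sSup_mem ⟨2, two_mem_trussSet _ _ he'⟩ (trussSet_bdd G e')
    obtain ⟨H, hT, hmemH⟩ := hmem
    have heH : e ∉ H.edgeSet := by
      intro hcon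
      have : trussNumber G e' ≤ trussNumber G e :=
        le_csSup (trussSet_bdd G e) ⟨H, hT, hcon⟩
      omega
    obtain ⟨H', hT', hE⟩ := truss_transfer G e (trussNumber G e') H hT heH
    exact le_csSup (trussSet_bdd _ e') ⟨H', hT', hE ▸ hmemH⟩
end

section
/- Let G be a finite simple graph and (a,b) an edge of G with E_{S_{a,b}↔{a,b}} ≠ ∅. Then φ_G((a,b)) ≤ max{φ_G(e') : e' ∈ E_{S_{a,b}↔{a,b}}}. -/
open SimpleGraph

variable {V : Type*}

lemma truss_bdd [Fintype V] (G : SimpleGraph V) (e : Sym2 V) :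
    ∀ k ∈ {k : ℕ | ∃ H : G.Subgraph, IsTruss G k H ∧ e ∈ H.edgeSet}, k ≤ Fintype.card V + 2 := by
  rintro k ⟨H, ⟨_, _, hk⟩, he⟩
  induction e with
  | h x y =>
    rw [SimpleGraph.Subgraph.mem_edgeSet] at he
    have h1 := hk _ _ he
    have h2 : {c : V | H.Adj x c ∧ H.Adj y c}.ncard ≤ Fintype.card V := by
      calc {c : V | H.Adj x c ∧ H.Adj y c}.ncard ≤ (Set.univ : Set V).ncard :=
            Set.ncard_le_ncard (Set.subset_univ _) Set.finite_univ
        _ = Fintype.card V := by rw [Set.ncard_univ, Nat.card_eq_fintype_card]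
    omega

lemma two_truss (G : SimpleGraph V) {x y : V} (hxy : G.Adj x y) :
    IsTruss G 2 (G.subgraphOfAdj hxy) := by
  refine ⟨Subgraph.subgraphOfAdj_connected hxy, ⟨s(x, y), by simp⟩, fun a b _ => by simp⟩

lemma two_le_trussNumber_s10 [Fintype V] (G : SimpleGraph V) {x y : V} (hxy : G.Adj x y) :
    2 ≤ trussNumber G s(x, y) := by
  apply le_csSup ⟨Fintype.card V + 2, truss_bdd G _⟩
  exact ⟨G.subgraphOfAdj hxy, two_truss G hxy, by simp⟩

lemma trussNumber_le_kmax [Fintype V] (G : SimpleGraph V) (a b : V) {e : Sym2 V}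
    (he : e ∈ sideEdges G a b) : trussNumber G e ≤ kmax G a b := by
  apply le_csSup _ (Set.mem_image_of_mem _ he)
  refine ⟨Fintype.card V + 2, ?_⟩
  rintro n ⟨f, _, rfl⟩
  rcases Set.eq_empty_or_nonempty {k : ℕ | ∃ H : G.Subgraph, IsTruss G k H ∧ f ∈ H.edgeSet}
    with h | h
  · simp [trussNumber, h]
  · exact csSup_le h (truss_bdd G f)

theorem stmt10 [Fintype V] (G : SimpleGraph V) (a b : V) (hab : G.Adj a b)
    (hS : (sideEdges G a b).Nonempty) :
    trussNumber G s(a, b) ≤ kmax G a b := by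
  set S := {k : ℕ | ∃ H : G.Subgraph, IsTruss G k H ∧ s(a, b) ∈ H.edgeSet} with hSdef
  have hne : S.Nonempty := ⟨2, G.subgraphOfAdj hab, two_truss G hab, by simp⟩
  have hmem : trussNumber G s(a, b) ∈ S :=
    Nat.sSup_mem hne ⟨Fintype.card V + 2, truss_bdd G _⟩
  obtain ⟨H, ⟨_, _, hk⟩, he⟩ := hmem
  set k := trussNumber G s(a, b) with hkdef
  rw [SimpleGraph.Subgraph.mem_edgeSet] at he
  by_cases h3 : 3 ≤ k
  · have h1 := hk _ _ he
    have hpos : 0 < {c : V | H.Adj a c ∧ H.Adj b c}.ncard := by omega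
    obtain ⟨c, hac, hbc⟩ := Set.nonempty_of_ncard_ne_zero hpos.ne' (s := _)
    have hGac : G.Adj a c := H.adj_sub hac
    have hGbc : G.Adj b c := H.adj_sub hbc
    have hside : s(a, c) ∈ sideEdges G a b := ⟨c, hGac, hGbc, Or.inl rfl⟩
    have hk_le : k ≤ trussNumber G s(a, c) := by
      apply le_csSup ⟨Fintype.card V + 2, truss_bdd G _⟩
      exact ⟨H, ⟨‹H.Connected›, ‹H.edgeSet.Nonempty›, hk⟩, by
        rw [SimpleGraph.Subgraph.mem_edgeSet]; exact hac⟩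
    exact hk_le.trans (trussNumber_le_kmax G a b hside)
  · obtain ⟨e, heS⟩ := hS
    obtain ⟨c, hGac, hGbc, hor⟩ := heS
    have h2 : 2 ≤ trussNumber G e := by
      rcases hor with rfl | rfl
      · exact two_le_trussNumber_s10 G hGac
      · exact two_le_trussNumber_s10 G hGbc
    have := trussNumber_le_kmax G a b ⟨c, hGac, hGbc, hor⟩
    omega
end

section
/- Let G be a finite simple graph, k an integer, and e an edge of G contained in some k-truss of G. Let H be a k-truss of G containing e such that every k-truss of G containing e is a subgraph of H (H is the maximal k-truss containing e). If sup(e,H) < k − 1, then e is not contained in any (k+1)-truss of G. -/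
open SimpleGraph

variable {V : Type*}

theorem stmt17 [Fintype V] (G : SimpleGraph V) (k : ℕ) (a b : V)
    (H : G.Subgraph) (hH : IsTruss G k H) (heH : s(a, b) ∈ H.edgeSet)
    (hmax : ∀ H' : G.Subgraph, IsTruss G k H' → s(a, b) ∈ H'.edgeSet → H' ≤ H)
    (hsup : suppIn H a b + 1 < k) :
    ¬ ∃ H' : G.Subgraph, IsTruss G (k + 1) H' ∧ s(a, b) ∈ H'.edgeSet := by
  rintro ⟨H', ⟨hc, hne, hsupp⟩, heH'⟩
  have hH'k : IsTruss G k H' := by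
    refine ⟨hc, hne, fun x y hxy => ?_⟩
    exact le_trans (by omega) (hsupp x y hxy)
  have hle : H' ≤ H := hmax H' hH'k heH'
  have hadj : H'.Adj a b := Subgraph.mem_edgeSet.mp heH'
  have h1 : k + 1 - 2 ≤ suppIn H' a b := hsupp a b hadj
  have h2 : suppIn H' a b ≤ suppIn H a b := by
    apply Set.ncard_le_ncard _ (Set.toFinite _)
    intro c hc'
    exact ⟨hle.2 hc'.1, hle.2 hc'.2⟩
  unfold suppIn at h1 h2
  unfold suppIn at hsup
  omega
end

section
/- Let G be a finite simple graph and k an integer. If H1 and H2 are k-trusses of G that share at least one common edge, then the union subgraph H1 ∪ H2 is a k-truss of G. Consequently, for every edge e of G contained in some k-truss, there is a unique maximal k-truss of G containing e (the union of all k-trusses of G containing e). -/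
open SimpleGraph

variable {V : Type*}

namespace SimpleGraph.Subgraph

variable {G : SimpleGraph V}

/-- Finiteness is essential: `Set.ncard` of an infinite set is `0`. -/
lemma ncard_commonAdj_mono [Finite V] {H H' : G.Subgraph} (h : H ≤ H') (a b : V) :
    {c : V | H.Adj a c ∧ H.Adj b c}.ncard ≤ {c : V | H'.Adj a c ∧ H'.Adj b c}.ncard :=
  Set.ncard_le_ncard (fun _ ⟨hac, hbc⟩ ↦ ⟨h.2 hac, h.2 hbc⟩) (Set.toFinite _)

end SimpleGraph.Subgraph

namespace IsTruss

variable {G : SimpleGraph V} {k : ℕ} {H₁ H₂ : G.Subgraph}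

/-- The shared edge gives a common vertex, so the union is connected; triangle counts only
grow in the larger subgraph. -/
theorem sup [Finite V] (h₁ : IsTruss G k H₁) (h₂ : IsTruss G k H₂)
    (hshared : (H₁.edgeSet ∩ H₂.edgeSet).Nonempty) : IsTruss G k (H₁ ⊔ H₂) := by
  obtain ⟨e, he₁, he₂⟩ := hshared
  obtain ⟨a, b⟩ := e
  refine ⟨Subgraph.connected_sup h₁.1.preconnected h₂.1.preconnected
    ⟨a, (Subgraph.mem_edgeSet.1 he₁).fst_mem, (Subgraph.mem_edgeSet.1 he₂).fst_mem⟩,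
    ⟨s(a, b), Subgraph.edgeSet_mono le_sup_left he₁⟩, fun x y hxy ↦ ?_⟩
  rcases Subgraph.sup_adj.1 hxy with h | h
  · exact (h₁.2.2 x y h).trans (Subgraph.ncard_commonAdj_mono le_sup_left x y)
  · exact (h₂.2.2 x y h).trans (Subgraph.ncard_commonAdj_mono le_sup_right x y)

end IsTruss

def trussesContaining (G : SimpleGraph V) (k : ℕ) (e : Sym2 V) : Set G.Subgraph :=
  {H | IsTruss G k H ∧ e ∈ H.edgeSet}

section Maximal

variable [Finite V] {G : SimpleGraph V} {k : ℕ} {e : Sym2 V}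

lemma supClosed_trussesContaining : SupClosed (trussesContaining G k e) :=
  fun _ ⟨h₁, he₁⟩ _ ⟨h₂, he₂⟩ ↦
    ⟨h₁.sup h₂ ⟨e, he₁, he₂⟩, Subgraph.edgeSet_mono le_sup_left he₁⟩

lemma isGreatest_sSup_trussesContaining (hne : (trussesContaining G k e).Nonempty) :
    IsGreatest (trussesContaining G k e) (sSup (trussesContaining G k e)) :=
  ⟨supClosed_trussesContaining.sSup_mem_of_nonempty (Set.toFinite _) hne subset_rfl,
    fun _ hH ↦ le_sSup hH⟩

end Maximal

theorem stmt18 [Fintype V] (G : SimpleGraph V) (k : ℕ) :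
    (∀ H1 H2 : G.Subgraph, IsTruss G k H1 → IsTruss G k H2 →
      (H1.edgeSet ∩ H2.edgeSet).Nonempty → IsTruss G k (H1 ⊔ H2)) ∧
    (∀ e : Sym2 V, (∃ H : G.Subgraph, IsTruss G k H ∧ e ∈ H.edgeSet) →
      ∃! H : G.Subgraph, IsTruss G k H ∧ e ∈ H.edgeSet ∧
        ∀ H' : G.Subgraph, IsTruss G k H' → e ∈ H'.edgeSet → H' ≤ H) := by
  refine ⟨fun H₁ H₂ h₁ h₂ hshared ↦ h₁.sup h₂ hshared, fun e hne ↦ ?_⟩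
  have hmax := isGreatest_sSup_trussesContaining hne
  refine ⟨_, ⟨hmax.1.1, hmax.1.2, fun H' h' he' ↦ hmax.2 ⟨h', he'⟩⟩, ?_⟩
  rintro H ⟨hH, heH, hHmax⟩
  have hHgreatest : IsGreatest (trussesContaining G k e) H :=
    ⟨⟨hH, heH⟩, fun H' ⟨h', he'⟩ ↦ hHmax H' h' he'⟩
  exact hHgreatest.unique hmax
end
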